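/- arXiv:math/0407412 — 2 statements merged into one kernel-verified Lean document; each statement's English description precedes it below -/
import Mathlib

section
/- The Grothendieck polynomials satisfy the transition identity: G_{(1^p)}(x_1,...,x_k) = G_{(1^p)}(x_1,...,x_{k−1}) + x_k·G_{(1^{p−1})}(x_1,...,x_{k−1}) − x_k·G_{(1^p)}(x_1,...,x_{k−1}), for 1 ≤ p ≤ k, where G_{(1^p)}(x_1,...,x_k) is the Grothendieck polynomial of the cycle c_{[k,p]} = (k−p+1, k−p+2, ..., k+1). -/
/-!
`colPoly k p` is defined by the transition recursion, and `G (c_{[k,p]}) = colPoly k p` is proved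
by induction on `k`. Let `f = G (c_{[n,p+1]})`. This cycle has an ascent at every `i ≥ 1` except
`i = n`, and the image of `π_i` is `s_i`-symmetric, so `f` is symmetric in `x_1, …, x_n` and
involves no `x_j` with `j > n`; its descent at `n` says `π_n f = G (c_{[n-1,p]})`, known by
induction. Specialising that identity at `x_n ↦ x_t` and `x_t, …, x_{n-1}, x_{n+1} ↦ 0` expresses
`f (x_1, …, x_t, 0, …)` through `f (x_1, …, x_{t-1}, 0, …)`, and telescoping down to `f (0) = 0`
gives the recursion. Finally `f (0) = 0`, and `x_0` does not occur in `f`, because along descending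
chains from `ω_0` every monomial of `G_w` keeps degree at least `ℓ(w)` and avoids `x_0`.
-/

open MvPolynomial

noncomputable section

/-- The length (number of inversions) of a finitely supported permutation of ℕ. -/
def len (w : Equiv.Perm ℕ) : ℕ := Set.ncard {p : ℕ × ℕ | p.1 < p.2 ∧ w p.2 < w p.1}

/-- The cycle `(a, a+1, ..., b)` sending `a ↦ a+1 ↦ ... ↦ b ↦ a`, as a permutation of ℕ. -/
def cyc (a b : ℕ) : Equiv.Perm ℕ :=
  ((List.range (b - a)).map (fun i => Equiv.swap (a + i) (a + i + 1))).prod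

/-- `IsGrothendieck G` : the family `G w ∈ ℤ[x_1, x_2, ...]` is the family of Grothendieck
polynomials: for each `n ≥ 1`, the longest permutation `ω_0` of `S_n` (acting on positions
`1, ..., n`) has `G ω_0 = x_1^{n-1} x_2^{n-2} ⋯ x_{n-1}`, and whenever
`ℓ(w·s_i) = ℓ(w) - 1` (with `s_i` the transposition `(i, i+1)`), one has
`G (w·s_i) = π_i (G w)`, where `π_i f = ∂_i((1 - x_{i+1})·f)` and `∂_i` is the divided
difference operator, characterized by `(x_i - x_{i+1})·∂_i f = f - s_i f` on polynomials. -/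
def IsGrothendieck (G : Equiv.Perm ℕ → MvPolynomial ℕ ℤ) : Prop :=
  (∀ n, 1 ≤ n → ∀ w : Equiv.Perm ℕ,
      (∀ i, 1 ≤ i → i ≤ n → w i = n + 1 - i) → (∀ i, n < i → w i = i) → w 0 = 0 →
      G w = ∏ i ∈ Finset.Icc 1 (n-1), X i ^ (n - i)) ∧
  (∃ D : ℕ → MvPolynomial ℕ ℤ → MvPolynomial ℕ ℤ,
      (∀ i f, (X i - X (i+1)) * D i f = f - MvPolynomial.rename (Equiv.swap i (i+1)) f) ∧
      (∀ (w : Equiv.Perm ℕ) (i : ℕ), 1 ≤ i →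
        len (w * Equiv.swap i (i+1)) + 1 = len w →
        G (w * Equiv.swap i (i+1)) = D i ((1 - X (i+1)) * G w)))

/-- `Gcol G k p` is `G_{(1^p)}(x_1, ..., x_k)`, the Grothendieck polynomial of the cycle
`c_{[k,p]} = (k-p+1, k-p+2, ..., k+1)`, with the convention that it is `0` for `p > k`. -/
def Gcol (G : Equiv.Perm ℕ → MvPolynomial ℕ ℤ) (k p : ℕ) : MvPolynomial ℕ ℤ :=
  if p ≤ k then G (cyc (k - p + 1) (k + 1)) else 0

namespace MvPolynomial

section CommSemiring

variable {σ R : Type*} [CommSemiring R]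

theorem aeval_congr_of_mem_supported {S : Type*} [CommSemiring S] [Algebra R S] {s : Set σ}
    {g₁ g₂ : σ → S} {p : MvPolynomial σ R} (hp : p ∈ supported R s) (h : Set.EqOn g₁ g₂ s) :
    aeval g₁ p = aeval g₂ p :=
  eval₂Hom_congr' rfl (fun _ hi _ => h (mem_supported.1 hp hi)) rfl

theorem aeval_eq_self_of_mem_supported {s : Set σ} {g : σ → MvPolynomial σ R}
    {p : MvPolynomial σ R} (hp : p ∈ supported R s) (h : Set.EqOn g X s) : aeval g p = p := by
  rw [aeval_congr_of_mem_supported hp h, aeval_X_left_apply]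

theorem rename_mem_supported {τ : Type*} {e : σ → τ} {s : Set σ} {t : Set τ}
    (he : Set.MapsTo e s t) {p : MvPolynomial σ R} (hp : p ∈ supported R s) :
    rename e p ∈ supported R t := by
  classical
  rw [mem_supported] at hp ⊢
  intro j hj
  obtain ⟨_, hi, rfl⟩ := mem_vars_rename e p hj
  exact he (hp hi)

theorem vars_subset_vars_mul_left [NoZeroDivisors R] {a : MvPolynomial σ R} (ha : a ≠ 0)
    (b : MvPolynomial σ R) : b.vars ⊆ (a * b).vars := by
  classical
  rcases eq_or_ne b 0 with rfl | hb
  · simp [vars_0]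
  rw [vars_def, vars_def, degrees_mul_eq ha hb, Multiset.toFinset_add]
  exact Finset.subset_union_right

theorem mem_supported_of_mul_left [NoZeroDivisors R] {s : Set σ} {a b : MvPolynomial σ R}
    (ha : a ≠ 0) (hab : a * b ∈ supported R s) : b ∈ supported R s := by
  rw [mem_supported] at hab ⊢
  exact (Finset.coe_subset.2 (vars_subset_vars_mul_left ha b)).trans hab

theorem rename_perm_mul (e₁ e₂ : Equiv.Perm σ) (p : MvPolynomial σ R) :
    rename ⇑(e₁ * e₂) p = rename e₁ (rename e₂ p) := by
  rw [rename_rename, Equiv.Perm.coe_mul]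

theorem rename_swap_eq_self_of_adjacent {p : MvPolynomial ℕ R} {a b : ℕ} (hab : a ≤ b)
    (h : ∀ t, a ≤ t → t < b → rename (Equiv.swap t (t + 1)) p = p) :
    rename (Equiv.swap a b) p = p := by
  induction b, hab using Nat.le_induction with
  | base => rw [Equiv.swap_self, Equiv.coe_refl, rename_id_apply]
  | succ b hab ih =>
    rcases hab.eq_or_lt with rfl | hlt
    · exact h a le_rfl (by omega)
    rw [← Equiv.swap_comm, ← Equiv.swap_mul_swap_mul_swap (y := b) (by omega) (by omega),
      rename_perm_mul, rename_perm_mul, h b (by omega) (by omega), ih fun t ht htb => h t ht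
        (by omega), h b (by omega) (by omega)]

theorem le_of_mem_vars_of_rename_swap_eq_self {p : MvPolynomial ℕ R} {k : ℕ}
    (h : ∀ j, k < j → rename (Equiv.swap j (j + 1)) p = p) {i : ℕ} (hi : i ∈ p.vars) : i ≤ k := by
  by_contra hik
  have hshift : ∀ d, i + d ∈ p.vars := by
    intro d
    induction d with
    | zero => exact hi
    | succ d ih =>
      rw [← h (i + d) (by omega)] at ih
      obtain ⟨l, hl, hswap⟩ := mem_vars_rename _ p ih
      obtain rfl : l = i + d + 1 := by rw [Equiv.swap_apply_eq_iff.mp hswap, Equiv.swap_apply_left]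
      exact hl
  have := Finset.le_sup (f := id) (hshift (p.vars.sup id + 1))
  simp only [id] at this
  omega

attribute [local instance] gradedAlgebra in
theorem homogeneousComponent_mul_of_isHomogeneous_left {a : MvPolynomial σ R} {i : ℕ}
    (ha : a.IsHomogeneous i) (b : MvPolynomial σ R) (n : ℕ) :
    homogeneousComponent n (a * b) = if i ≤ n then a * homogeneousComponent (n - i) b else 0 := by
  rw [← decomposition.decompose'_apply, ← decomposition.decompose'_apply]
  exact DirectSum.coe_decompose_mul_of_left_mem (homogeneousSubmodule σ R) n ha

def MinDegreeGE (n : ℕ) (f : MvPolynomial σ R) : Prop :=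
  ∀ m < n, homogeneousComponent m f = 0

namespace MinDegreeGE

variable {n : ℕ} {f : MvPolynomial σ R}

theorem of_isHomogeneous {d : ℕ} (hf : f.IsHomogeneous d) (hn : n ≤ d) : MinDegreeGE n f :=
  fun m hm => by rw [homogeneousComponent_of_mem hf, if_neg (by omega)]

theorem mul_left (hf : MinDegreeGE n f) (g : MvPolynomial σ R) : MinDegreeGE n (g * f) := by
  intro m hm
  conv_lhs => rw [← sum_homogeneousComponent g, Finset.sum_mul, map_sum]
  refine Finset.sum_eq_zero fun i _ => ?_
  rw [homogeneousComponent_mul_of_isHomogeneous_left (homogeneousComponent_isHomogeneous i g)]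
  split_ifs
  · rw [hf _ (by omega), mul_zero]
  · rfl

theorem rename {τ : Type*} (hf : MinDegreeGE n f) (e : σ → τ) : MinDegreeGE n (rename e f) :=
  fun m hm => by rw [← rename_homogeneousComponent, hf m hm, map_zero]

theorem constantCoeff_eq_zero (hf : MinDegreeGE n f) (hn : 1 ≤ n) : constantCoeff f = 0 := by
  have := hf 0 hn
  rwa [homogeneousComponent_zero, C_eq_zero, ← constantCoeff_eq] at this

theorem of_mul_left [NoZeroDivisors R] {a : MvPolynomial σ R} (ha : a.IsHomogeneous 1)
    (ha0 : a ≠ 0) (h : MinDegreeGE (n + 1) (a * f)) : MinDegreeGE n f := by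
  intro m hm
  have := h (m + 1) (by omega)
  rw [homogeneousComponent_mul_of_isHomogeneous_left ha, if_pos (by omega),
    Nat.add_sub_cancel] at this
  exact (mul_eq_zero.mp this).resolve_left ha0

end MinDegreeGE

end CommSemiring

section CommRing

variable {σ R : Type*} [CommRing R]

theorem MinDegreeGE.sub {n : ℕ} {f g : MvPolynomial σ R} (hf : MinDegreeGE n f)
    (hg : MinDegreeGE n g) : MinDegreeGE n (f - g) :=
  fun m hm => by rw [map_sub, hf m hm, hg m hm, sub_zero]

theorem rename_swap_eq_self_of_X_sub_X_mul_eq [IsDomain R] [DecidableEq σ] {i j : σ} (hij : i ≠ j)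
    {d g : MvPolynomial σ R} (h : (X i - X j) * d = g - rename (Equiv.swap i j) g) :
    rename (Equiv.swap i j) d = d := by
  have hs := congrArg (rename (Equiv.swap i j)) h
  rw [map_mul, map_sub, map_sub, rename_X, rename_X, Equiv.swap_apply_left,
    Equiv.swap_apply_right, ← rename_perm_mul, Equiv.swap_mul_self, Equiv.Perm.coe_one,
    rename_id_apply] at hs
  refine mul_left_cancel₀ (sub_ne_zero.2 ((X_injective (R := R)).ne hij)) ?_
  linear_combination -hs - h

end CommRing

end MvPolynomial

open Equiv

def inversions (w : Perm ℕ) : Set (ℕ × ℕ) := {p | p.1 < p.2 ∧ w p.2 < w p.1}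

theorem len_eq_ncard_inversions (w : Perm ℕ) : len w = (inversions w).ncard := rfl

def PermutesIcc (N : ℕ) (w : Perm ℕ) : Prop := w 0 = 0 ∧ ∀ j, N < j → w j = j

def IsLongestElement (n : ℕ) (w : Perm ℕ) : Prop :=
  (∀ i, 1 ≤ i → i ≤ n → w i = n + 1 - i) ∧ PermutesIcc n w

theorem PermutesIcc.mono {N N' : ℕ} {w : Perm ℕ} (hw : PermutesIcc N w) (h : N ≤ N') :
    PermutesIcc N' w :=
  ⟨hw.1, fun j hj => hw.2 j (by omega)⟩

theorem PermutesIcc.mul_swap {N i : ℕ} {w : Perm ℕ} (hw : PermutesIcc N w) (hi : 1 ≤ i)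
    (hiN : i < N) : PermutesIcc N (w * swap i (i + 1)) := by
  refine ⟨?_, fun j hj => ?_⟩
  · rw [Perm.mul_apply, swap_apply_of_ne_of_ne (by omega) (by omega), hw.1]
  · rw [Perm.mul_apply, swap_apply_of_ne_of_ne (by omega) (by omega), hw.2 j hj]

theorem PermutesIcc.apply_mem_Icc {N a : ℕ} {w : Perm ℕ} (hw : PermutesIcc N w) (ha : 1 ≤ a)
    (haN : a ≤ N) : 1 ≤ w a ∧ w a ≤ N := by
  constructor
  · by_contra h
    have : a = 0 := w.injective (by rw [hw.1]; omega)
    omega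
  · by_contra h
    have : w a = a := w.injective (hw.2 (w a) (by omega))
    omega

theorem PermutesIcc.inversions_subset {N : ℕ} {w : Perm ℕ} (hw : PermutesIcc N w) :
    inversions w ⊆ ↑((Finset.Icc 1 (N - 1)).biUnion fun a => (Finset.Ioc a N).image (a, ·)) := by
  rintro ⟨a, b⟩ ⟨hab, hw'⟩
  dsimp only at hab hw'
  have ha : 1 ≤ a := by
    by_contra h
    obtain rfl : a = 0 := by omega
    rw [hw.1] at hw'
    omega
  have hb : b ≤ N := by
    by_contra h
    rw [hw.2 b (by omega)] at hw'
    by_cases haN : a ≤ N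
    · have := (hw.apply_mem_Icc ha haN).2
      omega
    · rw [hw.2 a (by omega)] at hw'
      omega
  simp only [Finset.coe_biUnion, Finset.coe_Icc, Finset.coe_image, Finset.coe_Ioc,
    Set.mem_iUnion, Set.mem_image, Set.mem_Icc, Set.mem_Ioc, Prod.mk.injEq]
  exact ⟨a, ⟨ha, by omega⟩, b, ⟨hab, hb⟩, rfl, rfl⟩

theorem PermutesIcc.inversions_finite {N : ℕ} {w : Perm ℕ} (hw : PermutesIcc N w) :
    (inversions w).Finite :=
  (Finset.finite_toSet _).subset hw.inversions_subset

theorem PermutesIcc.len_le {N : ℕ} {w : Perm ℕ} (hw : PermutesIcc N w) :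
    len w ≤ ∑ a ∈ Finset.Icc 1 (N - 1), (N - a) := by
  calc len w ≤ _ := Set.ncard_le_ncard hw.inversions_subset (Finset.finite_toSet _)
    _ ≤ _ := by rw [Set.ncard_coe_finset]; exact Finset.card_biUnion_le
    _ ≤ _ := Finset.sum_le_sum fun a _ => Finset.card_image_le.trans (Nat.card_Ioc a N).le

theorem inversions_mul_swap_diff (w : Perm ℕ) (i : ℕ) :
    inversions (w * swap i (i + 1)) \ {(i, i + 1)} =
      Prod.map (swap i (i + 1)) (swap i (i + 1)) ⁻¹' (inversions w \ {(i, i + 1)}) := by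
  ext ⟨c, d⟩
  simp only [inversions, Set.mem_sdiff, Set.mem_ofPred_eq, Set.mem_singleton_iff, Set.mem_preimage,
    Prod.map_apply, Prod.mk.injEq, Perm.mul_apply]
  rw [swap_apply_def, swap_apply_def]
  split_ifs <;> omega

theorem len_mul_swap_add_one {N i : ℕ} {w : Perm ℕ} (hw : PermutesIcc N w)
    (hdesc : w (i + 1) < w i) : len (w * swap i (i + 1)) + 1 = len w := by
  have hmem : (i, i + 1) ∈ inversions w := ⟨by omega, hdesc⟩
  have hnotMem : (i, i + 1) ∉ inversions (w * swap i (i + 1)) := by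
    simp [inversions, swap_apply_left, swap_apply_right]
    omega
  rw [len_eq_ncard_inversions, len_eq_ncard_inversions, ← Set.sdiff_singleton_eq_self hnotMem,
    inversions_mul_swap_diff, Set.ncard_preimage_of_injective_subset_range
      (Prod.map_injective.2 ⟨(swap i (i + 1)).injective, (swap i (i + 1)).injective⟩) ?_,
    Set.ncard_sdiff_singleton_add_one hmem hw.inversions_finite]
  intro p _
  exact ⟨Prod.map (swap i (i + 1)) (swap i (i + 1)) p,
    Prod.ext (swap_apply_self _ _ _) (swap_apply_self _ _ _)⟩

theorem len_mul_swap {N i : ℕ} {w : Perm ℕ} (hw : PermutesIcc N w) (hi : 1 ≤ i) (hiN : i < N)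
    (hasc : w i < w (i + 1)) : len (w * swap i (i + 1)) = len w + 1 := by
  have hdesc : (w * swap i (i + 1)) (i + 1) < (w * swap i (i + 1)) i := by
    simpa [swap_apply_left, swap_apply_right] using hasc
  have := len_mul_swap_add_one (hw.mul_swap hi hiN) hdesc
  rw [mul_assoc, swap_mul_self, mul_one] at this
  omega

theorem PermutesIcc.isLongestElement {N : ℕ} {w : Perm ℕ} (hw : PermutesIcc N w)
    (hdesc : ∀ i, 1 ≤ i → i < N → w (i + 1) < w i) : IsLongestElement N w := by
  have hchain : ∀ t a, 1 ≤ a → a + t ≤ N → w (a + t) + t ≤ w a := by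
    intro t
    induction t with
    | zero => simp
    | succ t ih =>
      intro a ha haN
      have := hdesc (a + t) (by omega) (by omega)
      have := ih a ha (by omega)
      show w (a + t + 1) + (t + 1) ≤ w a
      omega
  refine ⟨fun i hi hiN => ?_, hw⟩
  have h1 := hchain (i - 1) 1 le_rfl (by omega)
  have h2 := hchain (N - i) i hi (by omega)
  rw [show 1 + (i - 1) = i by omega] at h1
  rw [show i + (N - i) = N by omega] at h2
  have := hw.apply_mem_Icc le_rfl (by omega : 1 ≤ N)
  have := hw.apply_mem_Icc (by omega : 1 ≤ N) le_rfl
  omega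

theorem PermutesIcc.induction_on_ascents {P : Perm ℕ → Prop}
    (top : ∀ n, 1 ≤ n → ∀ w, IsLongestElement n w → P w)
    (step : ∀ w i, 1 ≤ i → len (w * swap i (i + 1)) + 1 = len w → P w → P (w * swap i (i + 1)))
    {N : ℕ} {w : Perm ℕ} (hw : PermutesIcc N w) : P w := by
  replace hw : PermutesIcc (N + 1) w := hw.mono (by omega)
  induction h : ∑ a ∈ Finset.Icc 1 N, (N + 1 - a) - len w using Nat.strong_induction_on
    generalizing w with
  | _ d ih =>
  by_cases hasc : ∃ i, 1 ≤ i ∧ i < N + 1 ∧ w i < w (i + 1)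
  · obtain ⟨i, hi, hin, hwi⟩ := hasc
    have hlen := len_mul_swap hw hi hin hwi
    have hw' := hw.mul_swap hi hin
    have := hw'.len_le
    rw [Nat.add_sub_cancel] at this
    have hP := step _ i hi (by rw [mul_assoc, swap_mul_self, mul_one]; omega)
      (ih _ (by omega) hw' rfl)
    rwa [mul_assoc, swap_mul_self, mul_one] at hP
  · push Not at hasc
    exact top (N + 1) (by omega) w (hw.isLongestElement fun i hi hin =>
      lt_of_le_of_ne (hasc i hi hin) fun h => by simpa using w.injective h)

theorem cyc_self (a : ℕ) : cyc a a = 1 := by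
  simp [cyc]

theorem cyc_succ {a b : ℕ} (h : a ≤ b) : cyc a (b + 1) = cyc a b * swap b (b + 1) := by
  rw [cyc, cyc, show b + 1 - a = b - a + 1 by omega, List.range_succ, List.map_append,
    List.prod_append, List.map_singleton, List.prod_singleton, show a + (b - a) = b by omega]

theorem cyc_apply {a b : ℕ} (h : a ≤ b) (x : ℕ) :
    cyc a b x = if x < a ∨ b < x then x else if x < b then x + 1 else a := by
  induction b, h using Nat.le_induction generalizing x with
  | base =>
    rw [cyc_self, Perm.one_apply]
    split_ifs <;> omega
  | succ b hab ih =>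
    rw [cyc_succ hab, Perm.mul_apply, swap_apply_def]
    split_ifs <;> simp only [ih] <;> split_ifs <;> omega

theorem permutesIcc_cyc {a b : ℕ} (ha : 1 ≤ a) (hab : a ≤ b) : PermutesIcc b (cyc a b) :=
  ⟨by rw [cyc_apply hab, if_pos (by omega)], fun j hj => by rw [cyc_apply hab, if_pos (by omega)]⟩

def zeroVarsFrom {R : Type*} [CommSemiring R] (a : ℕ) :
    MvPolynomial ℕ R →ₐ[R] MvPolynomial ℕ R :=
  aeval fun i => if i < a then X i else 0

def colPoly : ℕ → ℕ → MvPolynomial ℕ ℤ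
  | _, 0 => 1
  | 0, _ + 1 => 0
  | k + 1, p + 1 => colPoly k (p + 1) + X (k + 1) * colPoly k p - X (k + 1) * colPoly k (p + 1)

theorem colPoly_zero_right (k : ℕ) : colPoly k 0 = 1 := by
  cases k <;> rfl

theorem colPoly_succ_succ (k p : ℕ) : colPoly (k + 1) (p + 1) =
    colPoly k (p + 1) + X (k + 1) * colPoly k p - X (k + 1) * colPoly k (p + 1) := rfl

theorem colPoly_eq_zero_of_lt {k p : ℕ} (h : k < p) : colPoly k p = 0 := by
  induction k generalizing p with
  | zero => obtain ⟨p, rfl⟩ := Nat.exists_eq_add_of_lt h; rfl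
  | succ k ih =>
    obtain ⟨p, rfl⟩ : ∃ p', p = p' + 1 := ⟨p - 1, by omega⟩
    rw [colPoly_succ_succ, ih (by omega), ih (by omega)]
    ring

theorem colPoly_mem_supported (k p : ℕ) : colPoly k p ∈ supported ℤ (Set.Icc 1 k) := by
  induction k generalizing p with
  | zero => cases p <;> simp [colPoly]
  | succ k ih =>
    cases p with
    | zero => exact colPoly_zero_right _ ▸ Subalgebra.one_mem _
    | succ p =>
      have hmono := supported_mono (R := ℤ) (Set.Icc_subset_Icc_right k.le_succ : Set.Icc 1 k ⊆ _)
      have hX : X (k + 1) ∈ supported ℤ (Set.Icc 1 (k + 1)) :=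
        X_mem_supported.2 ⟨by omega, le_rfl⟩
      rw [colPoly_succ_succ]
      exact sub_mem (add_mem (hmono (ih _)) (mul_mem hX (hmono (ih _))))
        (mul_mem hX (hmono (ih _)))

theorem zeroVarsFrom_colPoly {j k : ℕ} (h : j ≤ k) (p : ℕ) :
    zeroVarsFrom (j + 1) (colPoly k p) = colPoly j p := by
  induction k, h using Nat.le_induction generalizing p with
  | base =>
    exact aeval_eq_self_of_mem_supported (colPoly_mem_supported j p) fun i hi =>
      if_pos (Nat.lt_succ_of_le hi.2)
  | succ k hjk ih =>
    cases p with
    | zero => rw [colPoly_zero_right, colPoly_zero_right, map_one]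
    | succ p =>
      rw [colPoly_succ_succ, map_sub, map_add, map_mul, map_mul, zeroVarsFrom, aeval_X,
        if_neg (by omega), ← zeroVarsFrom, ih]
      ring

theorem zeroVarsFrom_succ_eq_of_divDiff {n p t : ℕ} {f : MvPolynomial ℕ ℤ}
    (hf : f ∈ supported ℤ (Set.Icc 1 n)) (hsymm : ∀ j, 1 ≤ j → j ≤ n → rename (swap j n) f = f)
    (hdiv : (X n - X (n + 1)) * colPoly (n - 1) p =
      (1 - X (n + 1)) * f - (1 - X n) * rename (swap n (n + 1)) f)
    (ht : 1 ≤ t) (htn : t ≤ n) :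
    zeroVarsFrom (t + 1) f = X t * colPoly (t - 1) p + (1 - X t) * zeroVarsFrom t f := by
  -- `Θ` sends `x_n ↦ x_t` and kills `x_t, …, x_{n-1}, x_{n+1}`.
  set Θ := (zeroVarsFrom (R := ℤ) (t + 1)).comp (rename (swap t n)) with hΘ
  have hΘ_apply (q : MvPolynomial ℕ ℤ) :
      Θ q = aeval ((fun i => if i < t + 1 then X i else 0) ∘ swap t n) q := by
    rw [hΘ, AlgHom.comp_apply, zeroVarsFrom, aeval_rename]
  have hXn : Θ (X n) = X t := by simp [hΘ, zeroVarsFrom, swap_apply_right]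
  have hXn1 : Θ (X (n + 1)) = 0 := by
    simp [hΘ, zeroVarsFrom, swap_apply_of_ne_of_ne (by omega : n + 1 ≠ t) (by omega : n + 1 ≠ n),
      htn]
  have hf_image : Θ f = zeroVarsFrom (t + 1) f := by
    rw [hΘ, AlgHom.comp_apply, hsymm t ht htn]
  have hsf_image : Θ (rename (swap n (n + 1)) f) = zeroVarsFrom t f := by
    rw [hΘ_apply, aeval_rename, zeroVarsFrom]
    refine aeval_congr_of_mem_supported hf fun i ⟨hi1, hin⟩ => ?_
    simp only [Function.comp_apply, swap_apply_def]
    split_ifs <;> first | rfl | omega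
  have hcol_image : Θ (colPoly (n - 1) p) = colPoly (t - 1) p := by
    rw [hΘ_apply, ← zeroVarsFrom_colPoly (j := t - 1) (k := n - 1) (by omega),
      Nat.sub_add_cancel ht, zeroVarsFrom]
    refine aeval_congr_of_mem_supported (colPoly_mem_supported _ _) fun i ⟨hi1, hin⟩ => ?_
    simp only [Function.comp_apply, swap_apply_def]
    split_ifs <;> first | rfl | omega
  have := congrArg Θ hdiv
  simp only [map_mul, map_sub, map_one, hXn, hXn1, hf_image, hsf_image, hcol_image] at this
  linear_combination -this

theorem eq_colPoly_of_divDiff {n p : ℕ} {f : MvPolynomial ℕ ℤ}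
    (hf : f ∈ supported ℤ (Set.Icc 1 n)) (hconst : constantCoeff f = 0)
    (hsymm : ∀ j, 1 ≤ j → j ≤ n → rename (swap j n) f = f)
    (hdiv : (X n - X (n + 1)) * colPoly (n - 1) p =
      (1 - X (n + 1)) * f - (1 - X n) * rename (swap n (n + 1)) f) :
    f = colPoly n (p + 1) := by
  have htrunc : ∀ j ≤ n, zeroVarsFrom (j + 1) f = colPoly j (p + 1) := by
    intro j hj
    induction j with
    | zero =>
      rw [zeroVarsFrom, aeval_eq_constantCoeff_of_vars fun i hi =>
        if_neg (by have := (mem_supported.1 hf hi).1; omega), hconst, map_zero]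
      rfl
    | succ j ih =>
      rw [zeroVarsFrom_succ_eq_of_divDiff hf hsymm hdiv (by omega) hj, Nat.add_sub_cancel,
        ih (by omega), colPoly_succ_succ]
      ring
  rw [← htrunc n le_rfl, zeroVarsFrom]
  exact (aeval_eq_self_of_mem_supported hf fun i hi => if_pos (Nat.lt_succ_of_le hi.2)).symm

namespace IsGrothendieck

variable {G : Perm ℕ → MvPolynomial ℕ ℤ}

theorem apply_of_isLongestElement (hG : IsGrothendieck G) {n : ℕ} (hn : 1 ≤ n) {w : Perm ℕ}
    (hw : IsLongestElement n w) : G w = ∏ i ∈ Finset.Icc 1 (n - 1), X i ^ (n - i) :=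
  hG.1 n hn w hw.1 hw.2.2 hw.2.1

theorem apply_one (hG : IsGrothendieck G) : G 1 = 1 := by
  have h1 : IsLongestElement 1 1 := ⟨fun i hi hi1 => by simp; omega, rfl, fun _ _ => rfl⟩
  simp [hG.apply_of_isLongestElement le_rfl h1]

theorem minDegreeGE_len_and_mem_supported (hG : IsGrothendieck G) {N : ℕ} {w : Perm ℕ}
    (hw : PermutesIcc N w) : MinDegreeGE (len w) (G w) ∧ G w ∈ supported ℤ (Set.Ici 1) := by
  refine hw.induction_on_ascents (P := fun w => MinDegreeGE (len w) (G w) ∧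
    G w ∈ supported ℤ (Set.Ici 1)) (fun n hn w hw => ?_) fun w i hi hlen ⟨hdeg, hsupp⟩ => ?_
  · rw [hG.apply_of_isLongestElement hn hw]
    refine ⟨MinDegreeGE.of_isHomogeneous (IsHomogeneous.prod _ _ _ fun i _ =>
      (isHomogeneous_X ℤ i).pow _) ?_, Subalgebra.prod_mem _ fun i hi =>
        pow_mem (X_mem_supported.2 (Finset.mem_Icc.1 hi).1) _⟩
    simpa using hw.2.len_le
  · obtain ⟨-, D, hD, hRec⟩ := hG
    rw [hRec w i hi hlen]
    have hXX : (X i - X (i + 1) : MvPolynomial ℕ ℤ) ≠ 0 :=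
      sub_ne_zero.2 ((X_injective (R := ℤ)).ne (by omega))
    have hg := hD i ((1 - X (i + 1)) * G w)
    refine ⟨.of_mul_left ((isHomogeneous_X ℤ i).sub (isHomogeneous_X ℤ (i + 1))) hXX ?_,
      mem_supported_of_mul_left hXX ?_⟩
    · rw [hlen, hg]
      exact (hdeg.mul_left _).sub ((hdeg.mul_left _).rename _)
    · have hsupp' : (1 - X (i + 1)) * G w ∈ supported ℤ (Set.Ici 1) :=
        mul_mem (sub_mem (one_mem _) (X_mem_supported.2 (by simp))) hsupp
      rw [hg]
      refine sub_mem hsupp' (rename_mem_supported (fun j (hj : 1 ≤ j) => ?_) hsupp')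
      rw [swap_apply_def]
      simp only [Set.mem_Ici]
      split_ifs <;> omega

theorem X_sub_X_mul_apply_mul_swap (hG : IsGrothendieck G) {N i : ℕ} {w : Perm ℕ}
    (hw : PermutesIcc N w) (hi : 1 ≤ i) (hdesc : w (i + 1) < w i) :
    (X i - X (i + 1)) * G (w * swap i (i + 1)) =
      (1 - X (i + 1)) * G w - (1 - X i) * rename (swap i (i + 1)) (G w) := by
  obtain ⟨-, D, hD, hRec⟩ := hG
  rw [hRec w i hi (len_mul_swap_add_one hw hdesc), hD, map_mul, map_sub, map_one, rename_X,
    swap_apply_right]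

theorem rename_swap_apply_of_lt (hG : IsGrothendieck G) {N i : ℕ} {w : Perm ℕ}
    (hw : PermutesIcc N w) (hi : 1 ≤ i) (hasc : w i < w (i + 1)) :
    rename (swap i (i + 1)) (G w) = G w := by
  obtain ⟨-, D, hD, hRec⟩ := hG
  have hw' := (hw.mono (le_max_left N (i + 1))).mul_swap hi (by omega)
  have hdesc : (w * swap i (i + 1)) (i + 1) < (w * swap i (i + 1)) i := by
    simpa [swap_apply_left, swap_apply_right] using hasc
  have hG_w := hRec _ i hi (len_mul_swap_add_one hw' hdesc)
  rw [mul_assoc, swap_mul_self, mul_one] at hG_w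
  rw [hG_w]
  exact rename_swap_eq_self_of_X_sub_X_mul_eq (by omega) (hD i _)

theorem apply_cyc_succ (hG : IsGrothendieck G) {m n p : ℕ} (hm : 1 ≤ m) (hmn : m ≤ n)
    (hprev : G (cyc m n) = colPoly (n - 1) p) : G (cyc m (n + 1)) = colPoly n (p + 1) := by
  set c := cyc m (n + 1) with hc_def
  have hc : PermutesIcc (n + 1) c := permutesIcc_cyc hm (by omega)
  have hinv : ∀ i, 1 ≤ i → i ≠ n → rename (swap i (i + 1)) (G c) = G c :=
    fun i hi hin => hG.rename_swap_apply_of_lt hc hi (by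
      simp only [hc_def, cyc_apply (by omega : m ≤ n + 1)]
      split_ifs <;> omega)
  have hdesc : c (n + 1) < c n := by
    simp only [hc_def, cyc_apply (by omega : m ≤ n + 1)]
    split_ifs <;> omega
  have hlen_pos : 1 ≤ len c := by
    have := len_mul_swap_add_one hc hdesc
    omega
  obtain ⟨hdeg, hsupp⟩ := hG.minDegreeGE_len_and_mem_supported hc
  refine eq_colPoly_of_divDiff ?_ (hdeg.constantCoeff_eq_zero hlen_pos) (fun j hj hjn =>
    rename_swap_eq_self_of_adjacent hjn fun t ht htn => hinv t (by omega) (by omega)) ?_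
  · rw [mem_supported] at hsupp ⊢
    exact fun i hi => ⟨hsupp hi, le_of_mem_vars_of_rename_swap_eq_self
      (fun j hj => hinv j (by omega) (by omega)) hi⟩
  · have hc_mul : c * swap n (n + 1) = cyc m n := by
      rw [hc_def, cyc_succ hmn, mul_assoc, swap_mul_self, mul_one]
    rw [← hprev, ← hc_mul]
    exact hG.X_sub_X_mul_apply_mul_swap hc (by omega) hdesc

theorem Gcol_eq_colPoly (hG : IsGrothendieck G) (k p : ℕ) : Gcol G k p = colPoly k p := by
  rcases lt_or_ge k p with hlt | hle
  · rw [Gcol, if_neg (by omega), colPoly_eq_zero_of_lt hlt]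
  rw [Gcol, if_pos hle]
  induction k generalizing p with
  | zero =>
    obtain rfl : p = 0 := by omega
    rw [cyc_self, hG.apply_one, colPoly_zero_right]
  | succ k ih =>
    cases p with
    | zero => rw [Nat.sub_zero, cyc_self, hG.apply_one, colPoly_zero_right]
    | succ p =>
      rw [show k + 1 - (p + 1) + 1 = k - p + 1 by omega]
      exact hG.apply_cyc_succ (by omega) (by omega) (ih p (by omega))

end IsGrothendieck

/-- The transition identity for Grothendieck polynomials: for `1 ≤ p ≤ k`,
`G_{(1^p)}(x_1,...,x_k) = G_{(1^p)}(x_1,...,x_{k-1}) + x_k·G_{(1^{p-1})}(x_1,...,x_{k-1})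
− x_k·G_{(1^p)}(x_1,...,x_{k-1})`. -/
theorem grothendieck_transition (G : Equiv.Perm ℕ → MvPolynomial ℕ ℤ)
    (hG : IsGrothendieck G) (k p : ℕ) (hp : 1 ≤ p) (hpk : p ≤ k) :
    Gcol G k p =
      Gcol G (k-1) p + X k * Gcol G (k-1) (p-1) - X k * Gcol G (k-1) p := by
  obtain ⟨k, rfl⟩ : ∃ k', k = k' + 1 := ⟨k - 1, by omega⟩
  obtain ⟨p, rfl⟩ : ∃ p', p = p' + 1 := ⟨p - 1, by omega⟩
  simp only [hG.Gcol_eq_colPoly, Nat.add_sub_cancel]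
  rfl

end
end

section
/- Let v be a permutation with no ascents in positions 1,...,k−1 (i.e. v(1) > v(2) > ... > v(k)). Then any saturated chain in the k-Bruhat order starting at v with labels (a_1,b_1),...,(a_q,b_q) satisfying conditions (P0) and (P1) is strictly increasing in the order ≺, i.e. (a_i,b_i) ≺ (a_{i+1},b_{i+1}) for all 1 ≤ i < q. -/
noncomputable section

/-- `IsKChain k v L` : the list of transposition labels `L = [(a_1,b_1),...,(a_q,b_q)]`
describes a saturated chain in the `k`-Bruhat order starting at `v`: each step is a Bruhat
cover `u ⋖ u·(a_i,b_i)` with `a_i ≤ k < b_i` (positions being positive integers). -/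
def IsKChain (k : ℕ) : Equiv.Perm ℕ → List (ℕ × ℕ) → Prop
  | _, [] => True
  | v, p :: t => 0 < p.1 ∧ p.1 ≤ k ∧ k < p.2 ∧
      len (v * Equiv.swap p.1 p.2) = len v + 1 ∧ IsKChain k (v * Equiv.swap p.1 p.2) t

/-- The endpoint of the chain starting at `v` with transposition labels `L`. -/
def chainEnd : Equiv.Perm ℕ → List (ℕ × ℕ) → Equiv.Perm ℕ
  | v, [] => v
  | v, p :: t => chainEnd (v * Equiv.swap p.1 p.2) t

/-- The order `≺` on labels of covers: `(a,b) ≺ (c,d)` iff `b > d`, or `b = d` and `a < c`. -/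
def prec (p q : ℕ × ℕ) : Prop := q.2 < p.2 ∨ (q.2 = p.2 ∧ p.1 < q.1)

/-- Condition (P1): `b_1 ≥ b_2 ≥ ... ≥ b_q` (0-indexed list access). -/
def CondP1 (L : List (ℕ × ℕ)) : Prop :=
  ∀ t, t + 1 < L.length → (L.getD (t+1) (0,0)).2 ≤ (L.getD t (0,0)).2

/-- Condition (P0): for `2 ≤ i ≤ q-1` (1-indexed; here `t = i-1` is the 0-indexed
position, so `1 ≤ t` and `t + 2 ≤ q`), if `a_j = a_i` for some `j < i`, then
`(a_i,b_i) ≺ (a_{i+1},b_{i+1})`. -/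
def CondP0 (L : List (ℕ × ℕ)) : Prop :=
  ∀ t, 1 ≤ t → t + 2 ≤ L.length →
    (∃ s, s < t ∧ (L.getD s (0,0)).1 = (L.getD t (0,0)).1) →
    prec (L.getD t (0,0)) (L.getD (t+1) (0,0))

/-- Multiplying by a swap preserves finiteness of the support. -/
lemma finsupp_mul_swap {u : Equiv.Perm ℕ} (a b : ℕ) (h : {i | u i ≠ i}.Finite) :
    {i | (u * Equiv.swap a b) i ≠ i}.Finite := by
  apply Set.Finite.subset (h.union ((Set.finite_singleton a).union (Set.finite_singleton b)))
  intro i hi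
  simp only [Set.mem_setOf_eq, Equiv.Perm.mul_apply] at hi
  by_cases hia : i = a
  · right; left; exact hia
  by_cases hib : i = b
  · right; right; exact hib
  · left
    rw [Equiv.swap_apply_of_ne_of_ne hia hib] at hi
    exact hi

/-- A finitely supported permutation has a finite inversion set. -/
lemma inv_finite {u : Equiv.Perm ℕ} (h : {i | u i ≠ i}.Finite) :
    {p : ℕ × ℕ | p.1 < p.2 ∧ u p.2 < u p.1}.Finite := by
  obtain ⟨N, hN⟩ := (h.union (h.image u)).bddAbove
  apply Set.Finite.subset ((Set.finite_Iic N).prod (Set.finite_Iic N))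
  rintro ⟨p, q⟩ ⟨h1, h2⟩
  simp only [Set.mem_setOf_eq] at h1 h2
  have hq : q ≤ N := by
    by_cases hqs : u q = q
    · rw [hqs] at h2
      by_cases hps : u p = p
      · omega
      · have : u p ≤ N := hN (Set.mem_union_right _ ⟨p, hps, rfl⟩)
        omega
    · exact hN (Set.mem_union_left _ hqs)
  exact ⟨by simp only [Set.mem_Iic]; omega, by simpa using hq⟩

/-- If `u b < u a` with `a < b`, then multiplying by `swap a b` does not increase length:
the inversions of `u * swap a b` inject into those of `u`. -/
lemma len_swap_le {u : Equiv.Perm ℕ} (hfin : {i | u i ≠ i}.Finite) {a b : ℕ}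
    (hab : a < b) (hlt : u b < u a) : len (u * Equiv.swap a b) ≤ len u := by
  classical
  set t := Equiv.swap a b with ht
  set f : ℕ × ℕ → ℕ × ℕ := fun x => if t x.1 < t x.2 then (t x.1, t x.2) else x with hf
  have hmaps : ∀ x ∈ {p : ℕ × ℕ | p.1 < p.2 ∧ (u * t) p.2 < (u * t) p.1},
      f x ∈ {p : ℕ × ℕ | p.1 < p.2 ∧ u p.2 < u p.1} := by
    rintro ⟨p, q⟩ ⟨hpq, hinv⟩
    simp only [Set.mem_setOf_eq, Equiv.Perm.mul_apply] at hpq hinv ⊢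
    simp only [hf]
    split_ifs with hc
    · exact ⟨hc, hinv⟩
    · refine ⟨hpq, ?_⟩
      have hne : t q ≠ t p := fun he => (by omega : p ≠ q) (t.injective he.symm)
      have htqp : t q < t p := lt_of_le_of_ne (not_lt.mp hc) hne
      by_cases hpa : p = a
      · by_cases hqb : q = b
        · have e1 : t p = b := by rw [hpa]; exact Equiv.swap_apply_left a b
          have e2 : t q = a := by rw [hqb]; exact Equiv.swap_apply_right a b
          rw [e1, e2] at hinv
          exact absurd hinv (lt_asymm hlt)
        · have hqa : q ≠ a := by omega
          have e1 : t p = b := by rw [hpa]; exact Equiv.swap_apply_left a b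
          have e2 : t q = q := Equiv.swap_apply_of_ne_of_ne hqa hqb
          rw [e1, e2] at hinv
          rw [hpa]
          exact hinv.trans hlt
      · by_cases hpb : p = b
        · have hqa : q ≠ a := by omega
          have hqb : q ≠ b := by omega
          have e1 : t p = a := by rw [hpb]; exact Equiv.swap_apply_right a b
          have e2 : t q = q := Equiv.swap_apply_of_ne_of_ne hqa hqb
          rw [e1, e2] at htqp
          omega
        · have e1 : t p = p := Equiv.swap_apply_of_ne_of_ne hpa hpb
          rw [e1] at htqp hinv
          by_cases hqa : q = a
          · have e2 : t q = b := by rw [hqa]; exact Equiv.swap_apply_left a b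
            rw [e2] at htqp
            omega
          · by_cases hqb : q = b
            · have e2 : t q = a := by rw [hqb]; exact Equiv.swap_apply_right a b
              rw [e2] at hinv
              rw [hqb]
              exact hlt.trans hinv
            · have e2 : t q = q := Equiv.swap_apply_of_ne_of_ne hqa hqb
              rw [e2] at htqp
              omega
  have hinj : Set.InjOn f {p : ℕ × ℕ | p.1 < p.2 ∧ (u * t) p.2 < (u * t) p.1} := by
    rintro ⟨p, q⟩ hx ⟨p', q'⟩ hy hxy
    simp only [hf] at hxy
    split_ifs at hxy with h1 h2 h2
    · simp only [Prod.mk.injEq] at hxy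
      exact Prod.ext (t.injective hxy.1) (t.injective hxy.2)
    · exfalso
      simp only [Prod.mk.injEq] at hxy
      apply h2
      rw [← hxy.1, ← hxy.2, ht, Equiv.swap_apply_self, Equiv.swap_apply_self]
      exact hx.1
    · exfalso
      simp only [Prod.mk.injEq] at hxy
      apply h1
      rw [hxy.1, hxy.2, ht, Equiv.swap_apply_self, Equiv.swap_apply_self]
      exact hy.1
    · exact hxy
  exact Set.ncard_le_ncard_of_injOn f hmaps hinj (inv_finite hfin)

/-- A Bruhat cover `len (u * swap a b) = len u + 1` with `a < b` forces `u a < u b`. -/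
lemma ascent_of_cover {u : Equiv.Perm ℕ} (hfin : {i | u i ≠ i}.Finite) {a b : ℕ}
    (hab : a < b) (hlen : len (u * Equiv.swap a b) = len u + 1) : u a < u b := by
  rcases lt_trichotomy (u a) (u b) with h | h | h
  · exact h
  · exact absurd (u.injective h) (by omega)
  · have := len_swap_le hfin hab h
    omega

lemma getD_take {α : Type*} (d : α) : ∀ (L : List α) (t s : ℕ), s < t →
    (L.take t).getD s d = L.getD s d := by
  intro L
  induction L with
  | nil => simp
  | cons x L ih =>
    intro t s hst
    match t, s with
    | t + 1, 0 => simp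
    | t + 1, s + 1 =>
      rw [List.take_succ_cons, List.getD_cons_succ, List.getD_cons_succ]
      exact ih t s (by omega)

lemma isKChain_take {k : ℕ} : ∀ (L : List (ℕ × ℕ)) (v : Equiv.Perm ℕ) (t : ℕ),
    IsKChain k v L → IsKChain k v (L.take t) := by
  intro L
  induction L with
  | nil => simp
  | cons p L ih =>
    intro v t hL
    match t with
    | 0 => trivial
    | t + 1 =>
      rw [List.take_succ_cons]
      exact ⟨hL.1, hL.2.1, hL.2.2.1, hL.2.2.2.1, ih _ _ hL.2.2.2.2⟩

lemma chainEnd_finsupp : ∀ (L : List (ℕ × ℕ)) (v : Equiv.Perm ℕ),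
    {i | v i ≠ i}.Finite → {i | chainEnd v L i ≠ i}.Finite := by
  intro L
  induction L with
  | nil => intro v hv; exact hv
  | cons p L ih => intro v hv; exact ih _ (finsupp_mul_swap p.1 p.2 hv)

/-- The data of step `t` of a `k`-chain, in terms of the intermediate permutation. -/
lemma chain_step {k : ℕ} : ∀ (L : List (ℕ × ℕ)) (v : Equiv.Perm ℕ),
    IsKChain k v L → ∀ t, t < L.length →
    0 < (L.getD t (0,0)).1 ∧ (L.getD t (0,0)).1 ≤ k ∧ k < (L.getD t (0,0)).2 ∧
    len (chainEnd v (L.take t) * Equiv.swap (L.getD t (0,0)).1 (L.getD t (0,0)).2)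
      = len (chainEnd v (L.take t)) + 1 ∧
    chainEnd v (L.take (t+1))
      = chainEnd v (L.take t) * Equiv.swap (L.getD t (0,0)).1 (L.getD t (0,0)).2 := by
  intro L
  induction L with
  | nil => intro v _ t ht; simp at ht
  | cons p L ih =>
    intro v hL t ht
    match t with
    | 0 =>
      refine ⟨hL.1, hL.2.1, hL.2.2.1, ?_, ?_⟩
      · simpa [chainEnd] using hL.2.2.2.1
      · simp [chainEnd]
    | t + 1 =>
      have := ih (v * Equiv.swap p.1 p.2) hL.2.2.2.2 t (by simpa using ht)
      simpa [List.take_succ_cons, List.getD_cons_succ, chainEnd] using this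

/-- Values at positions `≤ k` weakly increase along a `k`-chain. -/
lemma chain_mono {k : ℕ} : ∀ (L : List (ℕ × ℕ)) (v : Equiv.Perm ℕ),
    {i | v i ≠ i}.Finite → IsKChain k v L → ∀ p, p ≤ k → v p ≤ chainEnd v L p := by
  intro L
  induction L with
  | nil => intro v _ _ p _; exact le_refl _
  | cons x L ih =>
    intro v hv hL p hp
    obtain ⟨hx0, hxk, hkx, hlen, htail⟩ := hL
    have hab : x.1 < x.2 := by omega
    have hasc : v x.1 < v x.2 := ascent_of_cover hv hab hlen
    have h1 : v p ≤ (v * Equiv.swap x.1 x.2) p := by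
      by_cases hpa : p = x.1
      · rw [hpa]
        simp only [Equiv.Perm.mul_apply, Equiv.swap_apply_left]
        exact hasc.le
      · have hpb : p ≠ x.2 := by omega
        simp only [Equiv.Perm.mul_apply, Equiv.swap_apply_of_ne_of_ne hpa hpb, le_refl]
    exact h1.trans (ih _ (finsupp_mul_swap x.1 x.2 hv) htail p hp)

/-- A position `a ≤ k` not used as a first label is untouched by the chain. -/
lemma chain_untouched {k : ℕ} : ∀ (L : List (ℕ × ℕ)) (v : Equiv.Perm ℕ),
    IsKChain k v L → ∀ a, a ≤ k → (∀ s, s < L.length → (L.getD s (0,0)).1 ≠ a) →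
    chainEnd v L a = v a := by
  intro L
  induction L with
  | nil => intro v _ a _ _; rfl
  | cons x L ih =>
    intro v hL a hak hfresh
    have hx1 : x.1 ≠ a := by
      have := hfresh 0 (by simp)
      simpa using this
    have hx2 : x.2 ≠ a := by
      have := hL.2.2.1
      omega
    have he : (v * Equiv.swap x.1 x.2) a = v a := by
      simp only [Equiv.Perm.mul_apply]
      rw [Equiv.swap_apply_of_ne_of_ne (Ne.symm hx1) (Ne.symm hx2)]
    rw [show chainEnd v (x :: L) = chainEnd (v * Equiv.swap x.1 x.2) L from rfl,
      ih _ hL.2.2.2.2 a hak ?_, he]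
    intro s hs
    have := hfresh (s+1) (by simpa using Nat.succ_lt_succ hs)
    simpa using this

/-- If `v` has no ascents in positions `1, ..., k-1` (i.e. `v 1 > v 2 > ... > v k`), then
any saturated chain in the `k`-Bruhat order starting at `v` satisfying (P0) and (P1) is
strictly increasing in the order `≺`: `(a_i,b_i) ≺ (a_{i+1},b_{i+1})` for all `i`. -/
theorem monk_chain_of_no_ascents (k : ℕ) (hk : 1 ≤ k) (v : Equiv.Perm ℕ)
    (hv : {i | v i ≠ i}.Finite) (hv0 : v 0 = 0)
    (hdesc : ∀ i, 1 ≤ i → i < k → v (i+1) < v i)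
    (L : List (ℕ × ℕ)) (hL : IsKChain k v L) (h0 : CondP0 L) (h1 : CondP1 L) :
    ∀ t, t + 1 < L.length → prec (L.getD t (0,0)) (L.getD (t+1) (0,0)) := by
  have hdesc' : ∀ a, a ≤ k → ∀ c, 1 ≤ c → c < a → v a < v c := by
    intro a
    induction a with
    | zero => intro _ c _ hc; omega
    | succ n ih =>
      intro hak c hc hca
      rcases Nat.lt_succ_iff_lt_or_eq.mp hca with h | h
      · exact (hdesc n (by omega) (by omega)).trans (ih (by omega) c hc h)
      · subst h
        exact hdesc c hc (by omega)
  intro t ht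
  obtain ⟨hp0, hpk, hkp, hplen, hstep⟩ := chain_step L v hL t (by omega)
  obtain ⟨hq0, hqk, hkq, hqlen, -⟩ := chain_step L v hL (t+1) ht
  set p := L.getD t (0,0) with hp
  set q := L.getD (t+1) (0,0) with hqdef
  set u := chainEnd v (L.take t) with hu
  set w := chainEnd v (L.take (t+1)) with hw
  have hufin : {i | u i ≠ i}.Finite := chainEnd_finsupp _ v hv
  have hwfin : {i | w i ≠ i}.Finite := chainEnd_finsupp _ v hv
  have hpab : p.1 < p.2 := by omega
  have hqab : q.1 < q.2 := by omega
  have hascw : w q.1 < w q.2 := ascent_of_cover hwfin hqab hqlen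
  have hble : q.2 ≤ p.2 := h1 t ht
  rcases eq_or_lt_of_le hble with hbeq | hblt
  swap
  · exact Or.inl hblt
  by_cases hrep : 1 ≤ t ∧ ∃ s, s < t ∧ (L.getD s (0,0)).1 = p.1
  · exact h0 t hrep.1 (by omega) hrep.2
  have hfresh : ∀ s, s < t → (L.getD s (0,0)).1 ≠ p.1 := by
    intro s hs hEq
    exact hrep ⟨by omega, s, hs, hEq⟩
  have hup : u p.1 = v p.1 := by
    apply chain_untouched (L.take t) v (isKChain_take L v t hL) p.1 hpk
    intro s hs
    have hslen : s < t := by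
      rw [List.length_take] at hs; omega
    rw [getD_take _ L t s hslen]
    exact hfresh s hslen
  have hascu : u p.1 < u p.2 := ascent_of_cover hufin hpab hplen
  have hwp1 : w p.1 = u p.2 := by
    rw [hstep]
    simp [Equiv.Perm.mul_apply, Equiv.swap_apply_left]
  have hwp2 : w p.2 = u p.1 := by
    rw [hstep]
    simp [Equiv.Perm.mul_apply, Equiv.swap_apply_right]
  refine Or.inr ⟨hbeq, ?_⟩
  by_contra hcon
  push_neg at hcon
  rcases eq_or_lt_of_le hcon with hceq | hclt
  · -- q.1 = p.1
    rw [hbeq, hceq, hwp1, hwp2] at hascw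
    omega
  · -- q.1 < p.1
    have hwq1 : w q.1 = u q.1 := by
      rw [hstep]
      simp only [Equiv.Perm.mul_apply]
      rw [Equiv.swap_apply_of_ne_of_ne (by omega) (by omega)]
    have h2 : u q.1 < v p.1 := by
      calc u q.1 = w q.1 := hwq1.symm
        _ < w q.2 := hascw
        _ = w p.2 := by rw [hbeq]
        _ = u p.1 := hwp2
        _ = v p.1 := hup
    have h3 : v q.1 ≤ u q.1 := chain_mono (L.take t) v hv (isKChain_take L v t hL) q.1 hqk
    have h4 : v p.1 < v q.1 := hdesc' p.1 hpk q.1 hq0 hclt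
    omega

end
end
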